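/- Let n, k, m be integers with 0 ≤ k ≤ m and 2m < n, let f₀ ∈ A⁰_{n,k}, and set f = ψ_n^{m−k}(f₀) ∈ A_{n,m} ⊆ A_{n+1,m}. Define g₁ = ((m−k+1)/(n−2k+1)) · ( x_{n+1}·f + ψ_n^{m−k+1}(f₀) ) and g₂ = (1/(n−2k+1)) · ( (n−m−k)·x_{n+1}·f − (m−k+1)·ψ_n^{m−k+1}(f₀) ) in A_{n+1,m+1}. Then ‖g₁‖² = ((m−k+1)/(n−2k+1)) · ‖f‖² and ‖g₂‖² = ((n−m−k)/(n−2k+1)) · ‖f‖². -/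

import Mathlib

open MvPolynomial Finset

noncomputable section

/-- The "square-free monomial" `x_I = ∏_{i ∈ I} x_i`. -/
def xI (n : ℕ) (I : Finset (Fin n)) : MvPolynomial (Fin n) ℂ := ∏ i ∈ I, X i

/-- `A_{n,k}`: the span of the square-free monomials of degree `k`. -/
def Aspace (n k : ℕ) : Submodule ℂ (MvPolynomial (Fin n) ℂ) :=
  Submodule.span ℂ {f | ∃ I : Finset (Fin n), I.card = k ∧ f = xI n I}

/-- The coefficient `c_I` of the monomial `x_I` in `f`. -/
def coeffI {n : ℕ} (f : MvPolynomial (Fin n) ℂ) (I : Finset (Fin n)) : ℂ :=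
  MvPolynomial.coeff (∑ i ∈ I, Finsupp.single i 1) f

/-- `A⁰_{n,k}`: elements `∑ c_I x_I` of `A_{n,k}` with `∑_{j ∉ J} c_{J ∪ {j}} = 0`
for every `(k-1)`-element subset `J`. -/
def A0space (n k : ℕ) : Submodule ℂ (MvPolynomial (Fin n) ℂ) where
  carrier := {f | f ∈ Aspace n k ∧ ∀ J : Finset (Fin n), J.card = k - 1 →
    ∑ j ∈ Jᶜ, coeffI f (insert j J) = 0}
  add_mem' := by
    rintro f g ⟨hf1, hf2⟩ ⟨hg1, hg2⟩
    refine ⟨Submodule.add_mem _ hf1 hg1, fun J hJ => ?_⟩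
    have h1 := hf2 J hJ
    have h2 := hg2 J hJ
    simp only [coeffI] at h1 h2 ⊢
    simp only [coeff_add]
    rw [Finset.sum_add_distrib, h1, h2, add_zero]
  zero_mem' := by
    refine ⟨Submodule.zero_mem _, fun J hJ => ?_⟩
    simp [coeffI]
  smul_mem' := by
    rintro c f ⟨hf1, hf2⟩
    refine ⟨Submodule.smul_mem _ c hf1, fun J hJ => ?_⟩
    have h1 := hf2 J hJ
    simp only [coeffI] at h1 ⊢
    simp only [coeff_smul, smul_eq_mul]
    rw [← Finset.mul_sum, h1, mul_zero]

/-- `ψ_n^l`, the linear map sending the square-free monomial `x_I` to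
`x_I · ∑_S x_S`, the sum over all `l`-element subsets `S` of `{1,…,n} \ I`. -/
def psi (n l : ℕ) : MvPolynomial (Fin n) ℂ →ₗ[ℂ] MvPolynomial (Fin n) ℂ :=
  ∑ S ∈ Finset.univ.filter (fun S : Finset (Fin n) => S.card = l),
    (LinearMap.mulRight ℂ (xI n S)).comp
      (aeval (fun i : Fin n => if i ∈ S then 0 else X i) :
        MvPolynomial (Fin n) ℂ →ₐ[ℂ] MvPolynomial (Fin n) ℂ).toLinearMap

/-- `H^k_{n,m} = ψ_n^{m-k}(A⁰_{n,k})`. -/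
def Hspace (n m k : ℕ) : Submodule ℂ (MvPolynomial (Fin n) ℂ) :=
  (A0space n k).map (psi n (m - k))

/-- The squared norm of a form: the monomials `x_I` are an orthonormal basis. -/
def sqNorm {n : ℕ} (f : MvPolynomial (Fin n) ℂ) : ℝ :=
  ∑ d ∈ f.support, Complex.normSq (f.coeff d)

/-- The inner product of two forms: the monomials `x_I` are an orthonormal basis. -/
def pInner {n : ℕ} (f g : MvPolynomial (Fin n) ℂ) : ℂ :=
  ∑ d ∈ f.support, f.coeff d * (starRingEnd ℂ) (g.coeff d)

/-- The embedding `A_{n,m} ⊆ A_{n+1,m}` via `Fin.castSucc`. -/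
def emb (n : ℕ) : MvPolynomial (Fin n) ℂ →ₐ[ℂ] MvPolynomial (Fin (n + 1)) ℂ :=
  rename Fin.castSucc

namespace BranchAux
open MvPolynomial Finset

variable {N : ℕ}

def eS (T : Finset (Fin N)) : Fin N →₀ ℕ := ∑ i ∈ T, Finsupp.single i 1

lemma eS_apply (T : Finset (Fin N)) (a : Fin N) :
    eS T a = if a ∈ T then 1 else 0 := by
  classical
  simp [eS, Finset.sum_apply', Finsupp.single_apply, Finset.sum_ite_eq', eq_comm]

lemma eS_injective : Function.Injective (eS (N := N)) := by
  intro T T' h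
  ext a
  have := congrArg (fun g => g a) h
  simp only [eS_apply] at this
  by_cases hT : a ∈ T <;> by_cases hT' : a ∈ T' <;> simp_all

lemma xI_eq_monomial (T : Finset (Fin N)) : xI N T = monomial (eS T) 1 := by
  classical
  induction T using Finset.induction with
  | empty => simp [xI, eS, monomial_zero']
  | insert _ _ h ih =>
    rw [xI, Finset.prod_insert h, ← xI, ih]
    rw [show eS (insert _ _) = Finsupp.single _ 1 + eS _ from Finset.sum_insert h]
    rw [X, monomial_mul, one_mul]

lemma coeff_eS_xI (T T' : Finset (Fin N)) :
    coeff (eS T) (xI N T') = if T' = T then 1 else 0 := by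
  rw [xI_eq_monomial, coeff_monomial]
  by_cases h : T' = T
  · simp [h]
  · rw [if_neg h, if_neg fun he => h (eS_injective he)]

lemma coeffI_eq {f : MvPolynomial (Fin N) ℂ} {T : Finset (Fin N)} :
    coeffI f T = coeff (eS T) f := rfl

lemma coeff_sum_xI (A : Finset (Finset (Fin N))) (a : Finset (Fin N) → ℂ)
    (T : Finset (Fin N)) (hT : T ∈ A) :
    coeff (eS T) (∑ S ∈ A, a S • xI N S) = a T := by
  classical
  rw [coeff_sum]
  simp only [coeff_smul, coeff_eS_xI, smul_eq_mul]
  rw [Finset.sum_eq_single T]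
  · simp
  · intro b _ hb; simp [hb]
  · intro h; exact absurd hT h

lemma sqNorm_sum_xI (A : Finset (Finset (Fin N))) (a : Finset (Fin N) → ℂ) :
    sqNorm (∑ S ∈ A, a S • xI N S) = ∑ S ∈ A, Complex.normSq (a S) := by
  classical
  have hsupp : (∑ S ∈ A, a S • xI N S).support ⊆ A.image eS := by
    intro d hd
    by_contra hd'
    apply MvPolynomial.mem_support_iff.mp hd
    rw [coeff_sum]
    refine Finset.sum_eq_zero fun S hS => ?_
    rw [coeff_smul, xI_eq_monomial, coeff_monomial, if_neg, smul_zero]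
    intro h; exact hd' (Finset.mem_image.mpr ⟨S, hS, h⟩)
  rw [sqNorm, Finset.sum_subset hsupp]
  · rw [Finset.sum_image (fun x _ y _ h => eS_injective h)]
    exact Finset.sum_congr rfl fun S hS => by rw [coeff_sum_xI A a S hS]
  · intro d _ hd
    rw [MvPolynomial.notMem_support_iff.mp hd]
    simp

end BranchAux
namespace BranchAux
open MvPolynomial Finset

variable {N : ℕ}

lemma filter_card_eq (l : ℕ) :
    Finset.univ.filter (fun S : Finset (Fin N) => S.card = l)
      = Finset.powersetCard l (Finset.univ : Finset (Fin N)) := by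
  ext S; simp [Finset.mem_powersetCard]

lemma repr_of_mem_Aspace {K : ℕ} {f : MvPolynomial (Fin N) ℂ} (hf : f ∈ Aspace N K) :
    f = ∑ T ∈ Finset.powersetCard K (Finset.univ : Finset (Fin N)), coeffI f T • xI N T := by
  classical
  induction hf using Submodule.span_induction with
  | mem x hx =>
    obtain ⟨I, hI, rfl⟩ := hx
    have hImem : I ∈ Finset.powersetCard K (Finset.univ : Finset (Fin N)) :=
      Finset.mem_powersetCard.mpr ⟨Finset.subset_univ _, hI⟩
    rw [Finset.sum_eq_single I
      (fun T hT hTne => by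
        rw [coeffI_eq, coeff_eS_xI, if_neg (fun h => hTne h.symm), zero_smul])
      (fun h => absurd hImem h)]
    rw [coeffI_eq, coeff_eS_xI, if_pos rfl, one_smul]
  | zero => simp [coeffI]
  | add x y hx hy ihx ihy =>
    nth_rewrite 1 [ihx, ihy]
    rw [← Finset.sum_add_distrib]
    refine Finset.sum_congr rfl fun T _ => ?_
    simp only [coeffI, coeff_add, add_smul]
  | smul a x hx ihx =>
    nth_rewrite 1 [ihx]
    rw [Finset.smul_sum]
    refine Finset.sum_congr rfl fun T _ => ?_
    simp only [coeffI, coeff_smul, smul_smul, smul_eq_mul]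

lemma psi_xI (l : ℕ) (I : Finset (Fin N)) :
    psi N l (xI N I) =
      ∑ S ∈ (Finset.powersetCard l (Finset.univ : Finset (Fin N))).filter
          (fun S => Disjoint S I), xI N (I ∪ S) := by
  classical
  rw [psi, LinearMap.sum_apply, filter_card_eq]
  rw [Finset.sum_filter]
  refine Finset.sum_congr rfl fun S _ => ?_
  simp only [LinearMap.comp_apply, AlgHom.toLinearMap_apply, LinearMap.mulRight_apply]
  rw [xI, map_prod]
  simp only [aeval_X]
  by_cases h : Disjoint S I
  · rw [if_pos h]
    have : ∀ i ∈ I, (if i ∈ S then (0 : MvPolynomial (Fin N) ℂ) else X i) = X i := by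
      intro i hi
      rw [if_neg (fun hiS => (Finset.disjoint_left.mp h hiS hi))]
    rw [Finset.prod_congr rfl this]
    simp only [xI]
    exact (Finset.prod_union h.symm).symm
  · rw [if_neg h]
    obtain ⟨i, hiS, hiI⟩ := Finset.not_disjoint_iff.mp h
    rw [Finset.prod_eq_zero hiI (by rw [if_pos hiS]), zero_mul]

end BranchAux
namespace BranchAux
open MvPolynomial Finset

variable {N : ℕ}

lemma psi_repr {K l : ℕ} {f : MvPolynomial (Fin N) ℂ} (hf : f ∈ Aspace N K) :
    psi N l f = ∑ T ∈ Finset.powersetCard (K + l) (Finset.univ : Finset (Fin N)),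
      (∑ I ∈ Finset.powersetCard K T, coeffI f I) • xI N T := by
  classical
  nth_rewrite 1 [repr_of_mem_Aspace hf]
  rw [map_sum]
  simp only [map_smul, psi_xI, Finset.smul_sum, Finset.sum_smul]
  rw [Finset.sum_sigma', Finset.sum_sigma']
  refine Finset.sum_nbij' (fun p => ⟨p.1 ∪ p.2, p.1⟩) (fun q => ⟨q.2, q.1 \ q.2⟩)
    ?_ ?_ ?_ ?_ ?_
  · rintro ⟨I, S⟩ hp
    rw [Finset.mem_sigma] at hp
    obtain ⟨hI, hS⟩ := hp
    rw [Finset.mem_filter, Finset.mem_powersetCard] at hS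
    rw [Finset.mem_powersetCard] at hI
    refine Finset.mem_sigma.mpr ⟨Finset.mem_powersetCard.mpr ⟨Finset.subset_univ _, ?_⟩,
      Finset.mem_powersetCard.mpr ⟨Finset.subset_union_left, hI.2⟩⟩
    rw [Finset.card_union_of_disjoint hS.2.symm, hI.2, hS.1.2]
  · rintro ⟨T, I⟩ hq
    rw [Finset.mem_sigma, Finset.mem_powersetCard, Finset.mem_powersetCard] at hq
    obtain ⟨⟨_, hT⟩, hIT, hI⟩ := hq
    refine Finset.mem_sigma.mpr ⟨Finset.mem_powersetCard.mpr ⟨Finset.subset_univ _, hI⟩,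
      Finset.mem_filter.mpr ⟨Finset.mem_powersetCard.mpr ⟨Finset.subset_univ _, ?_⟩,
        Finset.sdiff_disjoint⟩⟩
    rw [Finset.card_sdiff_of_subset hIT, hT, hI]
    omega
  · rintro ⟨I, S⟩ hp
    rw [Finset.mem_sigma] at hp
    have hd := (Finset.mem_filter.mp hp.2).2
    simp only
    congr 1
    exact Finset.union_sdiff_cancel_left hd.symm
  · rintro ⟨T, I⟩ hq
    rw [Finset.mem_sigma, Finset.mem_powersetCard, Finset.mem_powersetCard] at hq
    simp only
    congr 1
    exact Finset.union_sdiff_of_subset hq.2.1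
  · rintro ⟨I, S⟩ _
    rfl

end BranchAux
namespace BranchAux
open MvPolynomial Finset

variable {N : ℕ}

lemma card_filter_supset {K l : ℕ} {U I : Finset (Fin N)} (hU : U.card = K + l + 1)
    (hIU : I ⊆ U) (hI : I.card = K) :
    ((Finset.powersetCard (K + l) U).filter (fun T => I ⊆ T)).card = l + 1 := by
  classical
  have : ((Finset.powersetCard (K + l) U).filter (fun T => I ⊆ T)).card
      = (Finset.powersetCard l (U \ I)).card := by
    refine Finset.card_bij' (fun T _ => T \ I) (fun S _ => I ∪ S) ?_ ?_ ?_ ?_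
    · intro T hT
      rw [Finset.mem_filter, Finset.mem_powersetCard] at hT
      refine Finset.mem_powersetCard.mpr ⟨Finset.sdiff_subset_sdiff hT.1.1 (le_refl _), ?_⟩
      rw [Finset.card_sdiff_of_subset hT.2, hT.1.2, hI]
      omega
    · intro S hS
      rw [Finset.mem_powersetCard] at hS
      have hdisj : Disjoint I S :=
        Finset.disjoint_of_subset_right hS.1 Finset.disjoint_sdiff
      refine Finset.mem_filter.mpr ⟨Finset.mem_powersetCard.mpr
        ⟨Finset.union_subset hIU (hS.1.trans Finset.sdiff_subset), ?_⟩,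
        Finset.subset_union_left⟩
      rw [Finset.card_union_of_disjoint hdisj, hI, hS.2]
    · intro T hT
      rw [Finset.mem_filter] at hT
      exact Finset.union_sdiff_of_subset hT.2
    · intro S hS
      rw [Finset.mem_powersetCard] at hS
      exact Finset.union_sdiff_cancel_left
        (Finset.disjoint_of_subset_right hS.1 Finset.disjoint_sdiff)
  rw [this, Finset.card_powersetCard, Finset.card_sdiff_of_subset hIU, hU, hI]
  rw [show K + l + 1 - K = l + 1 from by omega, Nat.choose_succ_self_right]

lemma idA {K l : ℕ} (c : Finset (Fin N) → ℂ) (U : Finset (Fin N))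
    (hU : U.card = K + l + 1) :
    ∑ T ∈ Finset.powersetCard (K + l) U, ∑ I ∈ Finset.powersetCard K T, c I
      = ((l + 1 : ℕ) : ℂ) * ∑ I ∈ Finset.powersetCard K U, c I := by
  classical
  have step1 : ∀ T ∈ Finset.powersetCard (K + l) U,
      ∑ I ∈ Finset.powersetCard K T, c I
        = ∑ I ∈ Finset.powersetCard K U, if I ⊆ T then c I else 0 := by
    intro T hT
    rw [Finset.mem_powersetCard] at hT
    rw [← Finset.sum_filter]
    congr 1
    ext I
    simp only [Finset.mem_filter, Finset.mem_powersetCard]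
    constructor
    · intro ⟨h1, h2⟩; exact ⟨⟨h1.trans hT.1, h2⟩, h1⟩
    · intro ⟨⟨_, h2⟩, h3⟩; exact ⟨h3, h2⟩
  rw [Finset.sum_congr rfl step1, Finset.sum_comm, Finset.mul_sum]
  refine Finset.sum_congr rfl fun I hI => ?_
  rw [Finset.mem_powersetCard] at hI
  rw [← Finset.sum_filter, Finset.sum_const, nsmul_eq_mul,
    card_filter_supset hU hI.1 hI.2]

end BranchAux
namespace BranchAux
open MvPolynomial Finset

variable {N : ℕ}

lemma idB {K l : ℕ} (c : Finset (Fin N) → ℂ)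
    (hh : ∀ J : Finset (Fin N), J.card = K - 1 → ∑ j ∈ Jᶜ, c (insert j J) = 0)
    (T : Finset (Fin N)) (hT : T.card = K + l) :
    ∑ j ∈ Tᶜ, ∑ I ∈ Finset.powersetCard K (insert j T), c I
      = ((Tᶜ.card : ℂ) - K) * ∑ I ∈ Finset.powersetCard K T, c I := by
  classical
  obtain (rfl | ⟨K', rfl⟩) : K = 0 ∨ ∃ K', K = K' + 1 := by
    rcases K with _ | K'
    · exact Or.inl rfl
    · exact Or.inr ⟨K', rfl⟩
  · simp only [Finset.powersetCard_zero, Finset.sum_singleton, Finset.sum_const,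
      nsmul_eq_mul]
    push_cast; ring
  · have step1 : ∀ j ∈ Tᶜ,
        ∑ I ∈ Finset.powersetCard (K' + 1) (insert j T), c I
          = (∑ I ∈ Finset.powersetCard (K' + 1) T, c I)
            + ∑ I' ∈ Finset.powersetCard K' T, c (insert j I') := by
      intro j hj
      have hjT : j ∉ T := Finset.mem_compl.mp hj
      rw [Finset.powersetCard_succ_insert hjT, Finset.sum_union, Finset.sum_image]
      · intro I₁ h₁ I₂ h₂ he
        rw [Finset.mem_coe, Finset.mem_powersetCard] at h₁ h₂
        have hj₁ : j ∉ I₁ := fun h => hjT (h₁.1 h)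
        have hj₂ : j ∉ I₂ := fun h => hjT (h₂.1 h)
        rw [← Finset.erase_insert hj₁, ← Finset.erase_insert hj₂, he]
      · rw [Finset.disjoint_right]
        intro I hI hI'
        rw [Finset.mem_image] at hI
        obtain ⟨I', _, rfl⟩ := hI
        rw [Finset.mem_powersetCard] at hI'
        exact hjT (hI'.1 (Finset.mem_insert_self j I'))
    rw [Finset.sum_congr rfl step1, Finset.sum_add_distrib, Finset.sum_const,
      Finset.sum_comm]
    have step2 : ∀ I' ∈ Finset.powersetCard K' T,
        ∑ j ∈ Tᶜ, c (insert j I') = - ∑ j ∈ T \ I', c (insert j I') := by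
      intro I' hI'
      rw [Finset.mem_powersetCard] at hI'
      have hcompl : I'ᶜ = Tᶜ ∪ (T \ I') := by
        ext a
        simp only [Finset.mem_compl, Finset.mem_union, Finset.mem_sdiff]
        by_cases haT : a ∈ T <;> by_cases haI : a ∈ I'
        · simp [haT, haI, hI'.1 haI]
        · simp [haT, haI]
        · exact absurd (hI'.1 haI) haT
        · simp [haT, haI]
      have h0 := hh I' (by rw [hI'.2]; omega)
      rw [hcompl, Finset.sum_union (by
        rw [Finset.disjoint_right]
        intro a ha
        rw [Finset.mem_sdiff] at ha
        exact fun hc => (Finset.mem_compl.mp hc) ha.1)] at h0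
      exact eq_neg_of_add_eq_zero_left h0
    rw [Finset.sum_congr rfl step2, Finset.sum_neg_distrib]
    have step3 : ∑ I' ∈ Finset.powersetCard K' T, ∑ j ∈ T \ I', c (insert j I')
        = ((K' + 1 : ℕ) : ℂ) * ∑ I ∈ Finset.powersetCard (K' + 1) T, c I := by
      rw [Finset.mul_sum]
      have : ∀ I ∈ Finset.powersetCard (K' + 1) T,
          ((K' + 1 : ℕ) : ℂ) * c I = ∑ j ∈ I, c I := by
        intro I hI
        rw [Finset.mem_powersetCard] at hI
        rw [Finset.sum_const, nsmul_eq_mul, hI.2]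
      rw [Finset.sum_congr rfl this, Finset.sum_sigma', Finset.sum_sigma']
      refine Finset.sum_nbij' (fun p => ⟨insert p.2 p.1, p.2⟩)
        (fun q => ⟨q.1.erase q.2, q.2⟩) ?_ ?_ ?_ ?_ ?_
      · rintro ⟨I', j⟩ hp
        rw [Finset.mem_sigma, Finset.mem_powersetCard] at hp
        obtain ⟨⟨hsub, hcard⟩, hj⟩ := hp
        rw [Finset.mem_sdiff] at hj
        refine Finset.mem_sigma.mpr ⟨Finset.mem_powersetCard.mpr
          ⟨Finset.insert_subset hj.1 hsub, ?_⟩, Finset.mem_insert_self _ _⟩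
        rw [Finset.card_insert_of_notMem hj.2, hcard]
      · rintro ⟨I, j⟩ hq
        rw [Finset.mem_sigma, Finset.mem_powersetCard] at hq
        obtain ⟨⟨hsub, hcard⟩, hj⟩ := hq
        refine Finset.mem_sigma.mpr ⟨Finset.mem_powersetCard.mpr
          ⟨(Finset.erase_subset _ _).trans hsub, ?_⟩, ?_⟩
        · rw [Finset.card_erase_of_mem hj, hcard]; omega
        · rw [Finset.mem_sdiff]
          exact ⟨hsub hj, Finset.notMem_erase _ _⟩
      · rintro ⟨I', j⟩ hp
        rw [Finset.mem_sigma] at hp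
        have hj := hp.2
        rw [Finset.mem_sdiff] at hj
        simp only
        congr 1
        exact Finset.erase_insert hj.2
      · rintro ⟨I, j⟩ hq
        rw [Finset.mem_sigma] at hq
        simp only
        congr 1
        exact Finset.insert_erase hq.2
      · rintro ⟨I', j⟩ _
        rfl
    rw [step3, nsmul_eq_mul]
    push_cast
    ring

end BranchAux
namespace BranchAux
open MvPolynomial Finset

variable {N : ℕ}

lemma powersetCard_pred (U : Finset (Fin N)) (t : ℕ) (hU : U.card = t + 1) :
    Finset.powersetCard t U = U.image (fun j => U.erase j) := by
  classical
  ext T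
  simp only [Finset.mem_powersetCard, Finset.mem_image]
  constructor
  · rintro ⟨hTU, hT⟩
    have hne : (U \ T).Nonempty := by
      rw [← Finset.card_pos, Finset.card_sdiff_of_subset hTU, hU, hT]; omega
    obtain ⟨j, hj⟩ := hne
    rw [Finset.mem_sdiff] at hj
    refine ⟨j, hj.1, ?_⟩
    refine (Finset.eq_of_subset_of_card_le ?_ ?_).symm
    · intro a ha
      exact Finset.mem_erase.mpr ⟨fun h => hj.2 (h ▸ ha), hTU ha⟩
    · rw [Finset.card_erase_of_mem hj.1, hU, hT]
      omega
  · rintro ⟨j, hj, rfl⟩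
    exact ⟨Finset.erase_subset _ _, by rw [Finset.card_erase_of_mem hj, hU]; omega⟩

lemma key_complex {K l : ℕ} (c : Finset (Fin N) → ℂ)
    (hh : ∀ J : Finset (Fin N), J.card = K - 1 → ∑ j ∈ Jᶜ, c (insert j J) = 0)
    (hKl : K + l ≤ N) :
    ((l + 1 : ℕ) : ℂ) * ∑ U ∈ Finset.powersetCard (K + l + 1) (Finset.univ : Finset (Fin N)),
        (∑ I ∈ Finset.powersetCard K U, c I) * (starRingEnd ℂ) (∑ I ∈ Finset.powersetCard K U, c I)
      = ((N : ℂ) - (K + l) - K) *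
        ∑ T ∈ Finset.powersetCard (K + l) (Finset.univ : Finset (Fin N)),
        (∑ I ∈ Finset.powersetCard K T, c I) * (starRingEnd ℂ) (∑ I ∈ Finset.powersetCard K T, c I) := by
  classical
  set dd : Finset (Fin N) → ℂ := fun V => ∑ I ∈ Finset.powersetCard K V, c I with hdd
  have way1 : ∑ U ∈ Finset.powersetCard (K + l + 1) (Finset.univ : Finset (Fin N)),
      ∑ T ∈ Finset.powersetCard (K + l) U, dd U * (starRingEnd ℂ) (dd T)
      = ((l + 1 : ℕ) : ℂ) * ∑ U ∈ Finset.powersetCard (K + l + 1) (Finset.univ : Finset (Fin N)),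
        dd U * (starRingEnd ℂ) (dd U) := by
    rw [Finset.mul_sum]
    refine Finset.sum_congr rfl fun U hU => ?_
    rw [Finset.mem_powersetCard] at hU
    rw [← Finset.mul_sum, ← map_sum]
    rw [show ∑ T ∈ Finset.powersetCard (K + l) U, dd T = ((l + 1 : ℕ) : ℂ) * dd U from
      idA c U hU.2]
    rw [map_mul, Complex.conj_natCast]
    ring
  have way2 : ∑ U ∈ Finset.powersetCard (K + l + 1) (Finset.univ : Finset (Fin N)),
      ∑ T ∈ Finset.powersetCard (K + l) U, dd U * (starRingEnd ℂ) (dd T)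
      = ∑ T ∈ Finset.powersetCard (K + l) (Finset.univ : Finset (Fin N)),
        ∑ j ∈ Tᶜ, dd (insert j T) * (starRingEnd ℂ) (dd T) := by
    have inner : ∀ U ∈ Finset.powersetCard (K + l + 1) (Finset.univ : Finset (Fin N)),
        ∑ T ∈ Finset.powersetCard (K + l) U, dd U * (starRingEnd ℂ) (dd T)
          = ∑ j ∈ U, dd U * (starRingEnd ℂ) (dd (U.erase j)) := by
      intro U hU
      rw [Finset.mem_powersetCard] at hU
      rw [powersetCard_pred U (K + l) hU.2, Finset.sum_image]
      intro x hx y hy he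
      exact Finset.erase_injOn U hx hy he
    rw [Finset.sum_congr rfl inner, Finset.sum_sigma', Finset.sum_sigma']
    refine Finset.sum_nbij' (fun p => ⟨p.1.erase p.2, p.2⟩)
      (fun q => ⟨insert q.2 q.1, q.2⟩) ?_ ?_ ?_ ?_ ?_
    · rintro ⟨U, j⟩ hp
      rw [Finset.mem_sigma, Finset.mem_powersetCard] at hp
      refine Finset.mem_sigma.mpr ⟨Finset.mem_powersetCard.mpr
        ⟨Finset.subset_univ _, ?_⟩, Finset.mem_compl.mpr (Finset.notMem_erase _ _)⟩
      rw [Finset.card_erase_of_mem hp.2, hp.1.2]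
      omega
    · rintro ⟨T, j⟩ hq
      rw [Finset.mem_sigma, Finset.mem_powersetCard] at hq
      refine Finset.mem_sigma.mpr ⟨Finset.mem_powersetCard.mpr
        ⟨Finset.subset_univ _, ?_⟩, Finset.mem_insert_self _ _⟩
      rw [Finset.card_insert_of_notMem (Finset.mem_compl.mp hq.2), hq.1.2]
    · rintro ⟨U, j⟩ hp
      rw [Finset.mem_sigma] at hp
      simp only
      congr 1
      exact Finset.insert_erase hp.2
    · rintro ⟨T, j⟩ hq
      rw [Finset.mem_sigma] at hq
      simp only
      congr 1
      exact Finset.erase_insert (Finset.mem_compl.mp hq.2)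
    · rintro ⟨U, j⟩ hp
      rw [Finset.mem_sigma] at hp
      simp only
      rw [Finset.insert_erase hp.2]
  rw [← way1, way2, Finset.mul_sum]
  refine Finset.sum_congr rfl fun T hT => ?_
  rw [Finset.mem_powersetCard] at hT
  rw [← Finset.sum_mul]
  rw [show ∑ j ∈ Tᶜ, dd (insert j T) = ((Tᶜ.card : ℂ) - K) * dd T from idB c hh T hT.2]
  have hcard : (Tᶜ.card : ℂ) = (N : ℂ) - (K + l) := by
    rw [Finset.card_compl, Fintype.card_fin, hT.2, Nat.cast_sub hKl]
    push_cast
    ring_nf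
  rw [hcard]
  ring

lemma key_real {K l : ℕ} (c : Finset (Fin N) → ℂ)
    (hh : ∀ J : Finset (Fin N), J.card = K - 1 → ∑ j ∈ Jᶜ, c (insert j J) = 0)
    (hKl : K + l ≤ N) :
    ((l : ℝ) + 1) * ∑ U ∈ Finset.powersetCard (K + l + 1) (Finset.univ : Finset (Fin N)),
        Complex.normSq (∑ I ∈ Finset.powersetCard K U, c I)
      = ((N : ℝ) - (K + l) - K) *
        ∑ T ∈ Finset.powersetCard (K + l) (Finset.univ : Finset (Fin N)),
        Complex.normSq (∑ I ∈ Finset.powersetCard K T, c I) := by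
  have h := key_complex c hh hKl
  simp only [Complex.mul_conj] at h
  rw [← Complex.ofReal_sum, ← Complex.ofReal_sum] at h
  have : (((l : ℝ) + 1) * ∑ U ∈ Finset.powersetCard (K + l + 1) (Finset.univ : Finset (Fin N)),
        Complex.normSq (∑ I ∈ Finset.powersetCard K U, c I) : ℂ)
      = ((((N : ℝ) - (K + l) - K) *
        ∑ T ∈ Finset.powersetCard (K + l) (Finset.univ : Finset (Fin N)),
        Complex.normSq (∑ I ∈ Finset.powersetCard K T, c I) : ℝ) : ℂ) := by
    push_cast
    push_cast at h
    convert h using 2 <;> ring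
  exact_mod_cast this

end BranchAux
namespace BranchAux
open MvPolynomial Finset

variable {N : ℕ} {ι κ : Type*}

lemma coeff_fam_ne (s : Finset ι) (V : ι → Finset (Fin N)) (a : ι → ℂ)
    (D : Finset (Fin N)) (h : ∀ i ∈ s, V i ≠ D) :
    coeff (eS D) (∑ i ∈ s, a i • xI N (V i)) = 0 := by
  rw [coeff_sum]
  refine Finset.sum_eq_zero fun i hi => ?_
  rw [coeff_smul, coeff_eS_xI, if_neg (h i hi), smul_zero]

lemma coeff_fam_eq (s : Finset ι) (V : ι → Finset (Fin N)) (a : ι → ℂ)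
    (hV : Set.InjOn V s) {i₀ : ι} (hi₀ : i₀ ∈ s) :
    coeff (eS (V i₀)) (∑ i ∈ s, a i • xI N (V i)) = a i₀ := by
  rw [coeff_sum]
  rw [Finset.sum_eq_single i₀]
  · rw [coeff_smul, coeff_eS_xI, if_pos rfl, smul_eq_mul, mul_one]
  · intro i hi hne
    rw [coeff_smul, coeff_eS_xI, if_neg (fun h => hne (hV hi hi₀ h)), smul_zero]
  · intro h; exact absurd hi₀ h

lemma support_fam (s : Finset ι) (V : ι → Finset (Fin N)) (a : ι → ℂ) :
    (∑ i ∈ s, a i • xI N (V i)).support ⊆ s.image (fun i => eS (V i)) := by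
  classical
  intro d hd
  by_contra hd'
  apply MvPolynomial.mem_support_iff.mp hd
  rw [coeff_sum]
  refine Finset.sum_eq_zero fun i hi => ?_
  rw [coeff_smul, xI_eq_monomial, coeff_monomial, if_neg, smul_zero]
  exact fun h => hd' (Finset.mem_image.mpr ⟨i, hi, h⟩)

lemma sqNorm_pair (s : Finset ι) (t : Finset κ)
    (V : ι → Finset (Fin N)) (W : κ → Finset (Fin N)) (a : ι → ℂ) (b : κ → ℂ)
    (hV : Set.InjOn V s) (hW : Set.InjOn W t)
    (hVW : ∀ i ∈ s, ∀ j ∈ t, V i ≠ W j) :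
    sqNorm (∑ i ∈ s, a i • xI N (V i) + ∑ j ∈ t, b j • xI N (W j))
      = ∑ i ∈ s, Complex.normSq (a i) + ∑ j ∈ t, Complex.normSq (b j) := by
  classical
  set f := ∑ i ∈ s, a i • xI N (V i) + ∑ j ∈ t, b j • xI N (W j) with hf
  have hsupp : f.support ⊆ s.image (fun i => eS (V i)) ∪ t.image (fun j => eS (W j)) := by
    refine (MvPolynomial.support_add).trans ?_
    exact Finset.union_subset_union (support_fam s V a) (support_fam t W b)
  have hdisj : Disjoint (s.image (fun i => eS (V i))) (t.image (fun j => eS (W j))) := by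
    rw [Finset.disjoint_left]
    intro d hd1 hd2
    obtain ⟨i, hi, rfl⟩ := Finset.mem_image.mp hd1
    obtain ⟨j, hj, he⟩ := Finset.mem_image.mp hd2
    exact hVW i hi j hj (eS_injective he.symm)
  rw [sqNorm, Finset.sum_subset hsupp (fun d _ hd => by
    rw [MvPolynomial.notMem_support_iff.mp hd]; simp)]
  rw [Finset.sum_union hdisj]
  congr 1
  · rw [Finset.sum_image (fun i hi j hj h => hV hi hj (eS_injective h))]
    refine Finset.sum_congr rfl fun i hi => ?_
    rw [hf, coeff_add, coeff_fam_eq s V a hV hi,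
      coeff_fam_ne t W b (V i) (fun j hj => (hVW i hi j hj).symm), add_zero]
  · rw [Finset.sum_image (fun i hi j hj h => hW hi hj (eS_injective h))]
    refine Finset.sum_congr rfl fun j hj => ?_
    rw [hf, coeff_add, coeff_fam_eq t W b hW hj,
      coeff_fam_ne s V a (W j) (fun i hi => hVW i hi j hj), zero_add]

lemma sqNorm_fam (s : Finset ι) (V : ι → Finset (Fin N)) (a : ι → ℂ)
    (hV : Set.InjOn V s) :
    sqNorm (∑ i ∈ s, a i • xI N (V i)) = ∑ i ∈ s, Complex.normSq (a i) := by
  have := sqNorm_pair s (∅ : Finset ι) V V a a hV (by simp [Set.InjOn])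
    (by intro i hi j hj; exact absurd hj (Finset.notMem_empty j))
  simpa using this

end BranchAux
namespace BranchAux
open MvPolynomial Finset

lemma emb_xI (n : ℕ) (T : Finset (Fin n)) :
    emb n (xI n T) = xI (n + 1) (T.image Fin.castSucc) := by
  rw [emb, xI, map_prod]
  simp only [rename_X]
  rw [xI, Finset.prod_image (fun x _ y _ h => Fin.castSucc_injective n h)]

lemma last_not_mem_image (n : ℕ) (T : Finset (Fin n)) :
    Fin.last n ∉ T.image Fin.castSucc := by
  simp only [Finset.mem_image, not_exists]
  rintro x ⟨_, hx⟩
  exact absurd hx (Fin.castSucc_lt_last x).ne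

lemma X_last_mul_xI (n : ℕ) (V : Finset (Fin (n + 1))) (hV : Fin.last n ∉ V) :
    X (Fin.last n) * xI (n + 1) V = xI (n + 1) (insert (Fin.last n) V) := by
  rw [xI, xI, Finset.prod_insert hV]

end BranchAux

open BranchAux
set_option maxHeartbeats 2000000

/-- (Corollary on norms, case `ξ_{n+1} = 1`.)  Let `0 ≤ k ≤ m`, `2m < n`,
`f₀ ∈ A⁰_{n,k}` and `f = ψ_n^{m-k}(f₀) ∈ A_{n,m} ⊆ A_{n+1,m}`.  With
`g₁ = ((m-k+1)/(n-2k+1))·(x_{n+1}·f + ψ_n^{m-k+1}(f₀))` and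
`g₂ = (1/(n-2k+1))·((n-m-k)·x_{n+1}·f - (m-k+1)·ψ_n^{m-k+1}(f₀))`,
we have `‖g₁‖² = ((m-k+1)/(n-2k+1))·‖f‖²` and `‖g₂‖² = ((n-m-k)/(n-2k+1))·‖f‖²`. -/
theorem branching_norms_xi_one (n k m : ℕ) (hk : k ≤ m) (hm : 2 * m < n)
    (f₀ : MvPolynomial (Fin n) ℂ) (hf₀ : f₀ ∈ A0space n k) :
    sqNorm ((((m : ℂ) - k + 1) / ((n : ℂ) - 2 * k + 1)) •
        (X (Fin.last n) * emb n (psi n (m - k) f₀) + emb n (psi n (m - k + 1) f₀)))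
      = (((m : ℝ) - k + 1) / ((n : ℝ) - 2 * k + 1)) * sqNorm (emb n (psi n (m - k) f₀)) ∧
    sqNorm (((1 : ℂ) / ((n : ℂ) - 2 * k + 1)) •
        (((n : ℂ) - m - k) • (X (Fin.last n) * emb n (psi n (m - k) f₀))
          - ((m : ℂ) - k + 1) • emb n (psi n (m - k + 1) f₀)))
      = (((n : ℝ) - m - k) / ((n : ℝ) - 2 * k + 1)) * sqNorm (emb n (psi n (m - k) f₀)) := by
  classical
  obtain ⟨hfA, hh⟩ := hf₀
  have hkm : k + (m - k) = m := by omega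
  have hkm1 : k + (m - k + 1) = m + 1 := by omega
  have hrepr1 : psi n (m - k) f₀ = ∑ T ∈ Finset.powersetCard m (Finset.univ : Finset (Fin n)),
      (∑ I ∈ Finset.powersetCard k T, coeffI f₀ I) • xI n T := by
    have h := psi_repr (l := m - k) hfA
    rwa [hkm] at h
  have hrepr2 : psi n (m - k + 1) f₀ = ∑ U ∈ Finset.powersetCard (m + 1) (Finset.univ : Finset (Fin n)),
      (∑ I ∈ Finset.powersetCard k U, coeffI f₀ I) • xI n U := by
    have h := psi_repr (l := m - k + 1) hfA
    rwa [hkm1] at h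
  have hφinj : Function.Injective (fun T : Finset (Fin n) => T.image Fin.castSucc) :=
    fun T T' h => Finset.image_injective (Fin.castSucc_injective n) h
  have hembP : emb n (psi n (m - k) f₀) = ∑ T ∈ Finset.powersetCard m (Finset.univ : Finset (Fin n)),
      (∑ I ∈ Finset.powersetCard k T, coeffI f₀ I) • xI (n + 1) (T.image Fin.castSucc) := by
    rw [hrepr1, map_sum]
    exact Finset.sum_congr rfl fun T _ => by rw [map_smul, emb_xI]
  have hembQ : emb n (psi n (m - k + 1) f₀) = ∑ U ∈ Finset.powersetCard (m + 1) (Finset.univ : Finset (Fin n)),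
      (∑ I ∈ Finset.powersetCard k U, coeffI f₀ I) • xI (n + 1) (U.image Fin.castSucc) := by
    rw [hrepr2, map_sum]
    exact Finset.sum_congr rfl fun U _ => by rw [map_smul, emb_xI]
  have hXP : X (Fin.last n) * emb n (psi n (m - k) f₀)
      = ∑ T ∈ Finset.powersetCard m (Finset.univ : Finset (Fin n)),
        (∑ I ∈ Finset.powersetCard k T, coeffI f₀ I) •
          xI (n + 1) (insert (Fin.last n) (T.image Fin.castSucc)) := by
    rw [hembP, Finset.mul_sum]
    refine Finset.sum_congr rfl fun T _ => ?_
    rw [mul_smul_comm, X_last_mul_xI n _ (last_not_mem_image n T)]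
  have hVinj : Set.InjOn (fun T : Finset (Fin n) => insert (Fin.last n) (T.image Fin.castSucc))
      ↑(Finset.powersetCard m (Finset.univ : Finset (Fin n))) := by
    intro T _ T' _ h
    apply hφinj
    simp only at h ⊢
    rw [← Finset.erase_insert (last_not_mem_image n T), h,
      Finset.erase_insert (last_not_mem_image n T')]
  have hWinj : Set.InjOn (fun U : Finset (Fin n) => U.image Fin.castSucc)
      ↑(Finset.powersetCard (m + 1) (Finset.univ : Finset (Fin n))) :=
    fun T _ T' _ h => hφinj h
  have hVW : ∀ T ∈ Finset.powersetCard m (Finset.univ : Finset (Fin n)),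
      ∀ U ∈ Finset.powersetCard (m + 1) (Finset.univ : Finset (Fin n)),
      insert (Fin.last n) (T.image Fin.castSucc) ≠ U.image Fin.castSucc := by
    intro T _ U _ h
    exact last_not_mem_image n U (h ▸ Finset.mem_insert_self _ _)
  have hkey : ((m : ℝ) - k + 1) *
        (∑ U ∈ Finset.powersetCard (m + 1) (Finset.univ : Finset (Fin n)),
          Complex.normSq (∑ I ∈ Finset.powersetCard k U, coeffI f₀ I))
      = ((n : ℝ) - m - k) *
        (∑ T ∈ Finset.powersetCard m (Finset.univ : Finset (Fin n)),
          Complex.normSq (∑ I ∈ Finset.powersetCard k T, coeffI f₀ I)) := by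
    have h := key_real (N := n) (K := k) (l := m - k) (coeffI f₀) hh (by omega)
    rw [hkm, Nat.cast_sub hk] at h
    convert h using 2 <;> push_cast <;> ring
  have hRHS : sqNorm (emb n (psi n (m - k) f₀))
      = ∑ T ∈ Finset.powersetCard m (Finset.univ : Finset (Fin n)),
          Complex.normSq (∑ I ∈ Finset.powersetCard k T, coeffI f₀ I) := by
    rw [hembP]
    exact sqNorm_fam _ _ _ (fun T _ T' _ h => hφinj h)
  have h2m : (2 * m : ℝ) < n := by exact_mod_cast hm
  have hkr : (k : ℝ) ≤ m := by exact_mod_cast hk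
  have hγ : ((n : ℝ) - 2 * k + 1) ≠ 0 := by nlinarith
  constructor
  · have hG1 : (((m : ℂ) - k + 1) / ((n : ℂ) - 2 * k + 1)) •
        (X (Fin.last n) * emb n (psi n (m - k) f₀) + emb n (psi n (m - k + 1) f₀))
        = (∑ T ∈ Finset.powersetCard m (Finset.univ : Finset (Fin n)),
            (((((m : ℝ) - k + 1) / ((n : ℝ) - 2 * k + 1) : ℝ) : ℂ) *
              (∑ I ∈ Finset.powersetCard k T, coeffI f₀ I)) •
              xI (n + 1) (insert (Fin.last n) (T.image Fin.castSucc)))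
          + ∑ U ∈ Finset.powersetCard (m + 1) (Finset.univ : Finset (Fin n)),
            (((((m : ℝ) - k + 1) / ((n : ℝ) - 2 * k + 1) : ℝ) : ℂ) *
              (∑ I ∈ Finset.powersetCard k U, coeffI f₀ I)) •
              xI (n + 1) (U.image Fin.castSucc) := by
      rw [hXP, hembQ, smul_add, Finset.smul_sum, Finset.smul_sum]
      congr 1 <;>
      · refine Finset.sum_congr rfl fun T _ => ?_
        rw [smul_smul]
        congr 1
        push_cast
        ring
    rw [hG1, sqNorm_pair _ _ _ _ _ _ hVinj hWinj hVW, hRHS]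
    simp only [Complex.normSq_mul, Complex.normSq_ofReal]
    rw [← Finset.mul_sum, ← Finset.mul_sum]
    field_simp
    rw [div_eq_div_iff (pow_ne_zero 2 (by contrapose! hγ; linarith)) (by contrapose! hγ; linarith)]
    linear_combination ((m:ℝ) - (k:ℝ) + 1) * ((n:ℝ) - 2*(k:ℝ) + 1) * hkey
  · have hG2 : ((1 : ℂ) / ((n : ℂ) - 2 * k + 1)) •
        (((n : ℂ) - m - k) • (X (Fin.last n) * emb n (psi n (m - k) f₀))
          - ((m : ℂ) - k + 1) • emb n (psi n (m - k + 1) f₀))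
        = (∑ T ∈ Finset.powersetCard m (Finset.univ : Finset (Fin n)),
            (((((n : ℝ) - m - k) / ((n : ℝ) - 2 * k + 1) : ℝ) : ℂ) *
              (∑ I ∈ Finset.powersetCard k T, coeffI f₀ I)) •
              xI (n + 1) (insert (Fin.last n) (T.image Fin.castSucc)))
          + ∑ U ∈ Finset.powersetCard (m + 1) (Finset.univ : Finset (Fin n)),
            (((-(((m : ℝ) - k + 1) / ((n : ℝ) - 2 * k + 1)) : ℝ) : ℂ) *
              (∑ I ∈ Finset.powersetCard k U, coeffI f₀ I)) •
              xI (n + 1) (U.image Fin.castSucc) := by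
      rw [hXP, hembQ]
      simp only [smul_sub, Finset.smul_sum, smul_smul]
      rw [sub_eq_add_neg, ← Finset.sum_neg_distrib]
      congr 1
      · refine Finset.sum_congr rfl fun T _ => ?_
        congr 1
        push_cast
        ring
      · refine Finset.sum_congr rfl fun U _ => ?_
        rw [← neg_smul]
        congr 1
        push_cast
        ring
    rw [hG2, sqNorm_pair _ _ _ _ _ _ hVinj hWinj hVW, hRHS]
    simp only [Complex.normSq_mul, Complex.normSq_ofReal]
    rw [← Finset.mul_sum, ← Finset.mul_sum]
    field_simp
    rw [div_eq_div_iff (pow_ne_zero 2 (by contrapose! hγ; linarith)) (by contrapose! hγ; linarith)]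
    linear_combination ((m:ℝ) - (k:ℝ) + 1) * ((n:ℝ) - 2*(k:ℝ) + 1) * hkey

end
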